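/- arXiv:2401.17772 — 5 statements merged into one kernel-verified Lean document; each statement's English description precedes it below -/
import Mathlib

section
/- Let Φ and Ψ be products of cyclotomic polynomials in ℤ[u]. If there exist integers a and b such that every root of Φ is the a-th power of a root of Ψ with multiplicity, i.e. Φ(u) = ∏(u - ζᵢᵃ) where Ψ(u) = ∏(u - ζᵢ), and symmetrically Ψ(u) = ∏(u - ξⱼᵇ) where Φ(u) = ∏(u - ξⱼ), and all roots of Φ and Ψ are roots of unity, then Φ = Ψ. -/
open Polynomial


lemma aux_prim_map (d A : ℕ) (hd : 0 < d) (hA : 0 < A) (hAd : Nat.Coprime A d) :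
    (primitiveRoots d ℂ).val.map (fun z => z ^ A) = (primitiveRoots d ℂ).val := by
  classical
  set C := A ^ (d.totient - 1) with hC
  have htot : 0 < d.totient := Nat.totient_pos.mpr hd
  have hmod : A * C ≡ 1 [MOD d] := by
    have h := Nat.ModEq.pow_totient hAd
    have : A * C = A ^ d.totient := by
      rw [hC, ← pow_succ']
      congr 1
      omega
    rwa [this]
  have hAC1 : 1 ≤ A * C := Nat.mul_pos hA (Nat.pow_pos hA)
  obtain ⟨k, hk⟩ := (Nat.modEq_iff_dvd' hAC1).mp hmod.symm
  have hACeq : A * C = 1 + d * k := by omega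
  have hkey : ∀ ζ ∈ primitiveRoots d ℂ, (ζ ^ A) ^ C = ζ := by
    intro ζ hζ
    have hprim : IsPrimitiveRoot ζ d := (mem_primitiveRoots hd).mp hζ
    have h1 : ζ ^ d = 1 := hprim.pow_eq_one
    rw [← pow_mul, hACeq, pow_add, pow_one, pow_mul, h1, one_pow, mul_one]
  have hinj : Set.InjOn (fun z : ℂ => z ^ A) ↑(primitiveRoots d ℂ) := by
    intro x hx y hy hxy
    simp only at hxy
    have := hkey x (Finset.mem_coe.mp hx)
    rw [hxy, hkey y (Finset.mem_coe.mp hy)] at this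
    exact this.symm
  have hsub : Finset.image (fun z : ℂ => z ^ A) (primitiveRoots d ℂ) ⊆ primitiveRoots d ℂ := by
    intro w hw
    obtain ⟨ζ, hζ, rfl⟩ := Finset.mem_image.mp hw
    exact (mem_primitiveRoots hd).mpr (((mem_primitiveRoots hd).mp hζ).pow_of_coprime A hAd)
  have himg : Finset.image (fun z : ℂ => z ^ A) (primitiveRoots d ℂ) = primitiveRoots d ℂ :=
    Finset.eq_of_subset_of_card_le hsub (by rw [Finset.card_image_of_injOn hinj])
  have hnodup : ((primitiveRoots d ℂ).val.map (fun z => z ^ A)).Nodup :=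
    Multiset.Nodup.map_on (fun x hx y hy => hinj hx hy) (primitiveRoots d ℂ).nodup
  calc (primitiveRoots d ℂ).val.map (fun z => z ^ A)
      = (Finset.image (fun z : ℂ => z ^ A) (primitiveRoots d ℂ)).val := by
        rw [Finset.image_val, Multiset.dedup_eq_self.mpr hnodup]
    _ = (primitiveRoots d ℂ).val := by rw [himg]

lemma aux_core (M A : ℕ) (hM : 0 < M) (hA : 0 < A) (hAM : Nat.Coprime A M) :
    ∀ (n : ℕ) (p : ℚ[X]), p.natDegree ≤ n → p ≠ 0 →
      (∀ z ∈ (p.map (algebraMap ℚ ℂ)).roots, z ^ M = 1) →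
      (p.map (algebraMap ℚ ℂ)).roots.map (fun z => z ^ A) = (p.map (algebraMap ℚ ℂ)).roots := by
  intro n
  induction n with
  | zero =>
    intro p hdeg hp0 _
    have hcard := Polynomial.card_roots' (p.map (algebraMap ℚ ℂ))
    have hdm : (p.map (algebraMap ℚ ℂ)).natDegree = p.natDegree :=
      Polynomial.natDegree_map_eq_of_injective (algebraMap ℚ ℂ).injective p
    have : (p.map (algebraMap ℚ ℂ)).roots = 0 := by
      rw [← Multiset.card_eq_zero]
      omega
    rw [this]
    rfl
  | succ n ih =>
    intro p hdeg hp0 hru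
    by_cases hroots : (p.map (algebraMap ℚ ℂ)).roots = 0
    · rw [hroots]; rfl
    · obtain ⟨z, hz⟩ := Multiset.exists_mem_of_ne_zero hroots
      have hzM : z ^ M = 1 := hru z hz
      have hfin : IsOfFinOrder z := isOfFinOrder_iff_pow_eq_one.mpr ⟨M, hM, hzM⟩
      set d := orderOf z with hd_def
      have hd : 0 < d := hfin.orderOf_pos
      have hprim : IsPrimitiveRoot z d := IsPrimitiveRoot.orderOf z
      have hdM : d ∣ M := orderOf_dvd_of_pow_eq_one hzM
      have hAd : Nat.Coprime A d := hAM.coprime_dvd_right hdM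
      have haeval : aeval z p = 0 := by
        rw [aeval_def, ← eval_map]
        exact (Polynomial.isRoot_of_mem_roots hz)
      have hdvd : cyclotomic d ℚ ∣ p := by
        rw [cyclotomic_eq_minpoly_rat hprim hd]
        exact minpoly.dvd ℚ z haeval
      obtain ⟨q, hq⟩ := hdvd
      have hcyc0 : cyclotomic d ℚ ≠ 0 := cyclotomic_ne_zero d ℚ
      have hq0 : q ≠ 0 := by rintro rfl; rw [mul_zero] at hq; exact hp0 hq
      have hdegq : q.natDegree ≤ n := by
        have h1 : p.natDegree = (cyclotomic d ℚ).natDegree + q.natDegree := by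
          rw [hq]; exact Polynomial.natDegree_mul hcyc0 hq0
        have h2 : (cyclotomic d ℚ).natDegree = d.totient := natDegree_cyclotomic d ℚ
        have h3 : 0 < d.totient := Nat.totient_pos.mpr hd
        omega
      have hmapsplit : p.map (algebraMap ℚ ℂ) = cyclotomic d ℂ * q.map (algebraMap ℚ ℂ) := by
        rw [hq, Polynomial.map_mul, map_cyclotomic]
      have hne : cyclotomic d ℂ * q.map (algebraMap ℚ ℂ) ≠ 0 :=
        mul_ne_zero (cyclotomic_ne_zero d ℂ) (Polynomial.map_ne_zero hq0)
      have hroots_eq : (p.map (algebraMap ℚ ℂ)).roots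
          = (cyclotomic d ℂ).roots + (q.map (algebraMap ℚ ℂ)).roots := by
        rw [hmapsplit, Polynomial.roots_mul hne]
      have hcycroots : (cyclotomic d ℂ).roots = (primitiveRoots d ℂ).val := by
        rw [cyclotomic_eq_prod_X_sub_primitiveRoots (Complex.isPrimitiveRoot_exp d hd.ne')]
        exact Polynomial.roots_prod_X_sub_C _
      have hihq := ih q hdegq hq0 (fun w hw => hru w (by rw [hroots_eq]; exact Multiset.mem_add.mpr (Or.inr hw)))
      rw [hroots_eq, Multiset.map_add, hihq, hcycroots, aux_prim_map d A hd hA hAd]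

/-- If `Φ, Ψ ∈ ℤ[u]` are monic of the same degree, all of whose complex
roots are roots of unity, and there exist integers `a, b` such that the multiset of
roots of `Φ` is the multiset of `a`-th powers of roots of `Ψ` and conversely the
multiset of roots of `Ψ` is the multiset of `b`-th powers of roots of `Φ`,
then `Φ = Ψ`. -/
theorem stmt_0 (Φ Ψ : Polynomial ℤ) (hΦ : Φ.Monic) (hΨ : Ψ.Monic)
    (hdeg : Φ.natDegree = Ψ.natDegree)
    (hΦru : ∀ z ∈ (Φ.map (Int.castRingHom ℂ)).roots, ∃ n : ℕ, 0 < n ∧ z ^ n = 1)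
    (hΨru : ∀ z ∈ (Ψ.map (Int.castRingHom ℂ)).roots, ∃ n : ℕ, 0 < n ∧ z ^ n = 1)
    (a b : ℤ)
    (h1 : (Φ.map (Int.castRingHom ℂ)).roots
        = (Ψ.map (Int.castRingHom ℂ)).roots.map (fun z => z ^ a))
    (h2 : (Ψ.map (Int.castRingHom ℂ)).roots
        = (Φ.map (Int.castRingHom ℂ)).roots.map (fun z => z ^ b)) :
    Φ = Ψ := by
  classical
  set T := (Φ.map (Int.castRingHom ℂ)).roots with hT_def
  set S := (Ψ.map (Int.castRingHom ℂ)).roots with hS_def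
  -- all roots are nonzero and of finite order
  have hfinord : ∀ z ∈ S + T, IsOfFinOrder z := by
    intro z hz
    rcases Multiset.mem_add.mp hz with h | h
    · obtain ⟨n, hn, h1⟩ := hΨru z h
      exact isOfFinOrder_iff_pow_eq_one.mpr ⟨n, hn, h1⟩
    · obtain ⟨n, hn, h1⟩ := hΦru z h
      exact isOfFinOrder_iff_pow_eq_one.mpr ⟨n, hn, h1⟩
  have hne0 : ∀ z ∈ S + T, z ≠ 0 := by
    intro z hz h0
    subst h0
    have hpos := (hfinord 0 hz).orderOf_pos
    have h := pow_orderOf_eq_one (0 : ℂ)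
    rw [zero_pow hpos.ne'] at h
    exact zero_ne_one h
  -- common exponent N
  set N : ℕ := ∏ z ∈ (S + T).toFinset, orderOf z with hN_def
  have hNpos : 0 < N := by
    apply Finset.prod_pos
    intro z hz
    exact (hfinord z (Multiset.mem_toFinset.mp hz)).orderOf_pos
  have hN : ∀ z ∈ S + T, z ^ N = 1 := by
    intro z hz
    exact orderOf_dvd_iff_pow_eq_one.mp
      (Finset.dvd_prod_of_mem _ (Multiset.mem_toFinset.mpr hz))
  -- positive natural exponents A, B congruent to a, b mod N
  set A : ℕ := (a % (N : ℤ)).toNat + N with hA_def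
  set B : ℕ := (b % (N : ℤ)).toNat + N with hB_def
  have hA : 0 < A := by omega
  have hB : 0 < B := by omega
  have hNne : (N : ℤ) ≠ 0 := by exact_mod_cast hNpos.ne'
  have htrans : ∀ (c : ℤ) (C : ℕ), (C : ℤ) = c % (N : ℤ) + N →
      ∀ z : ℂ, z ≠ 0 → z ^ N = 1 → z ^ c = z ^ C := by
    intro c C hC z hz0 hzN
    have hzNz : z ^ (N : ℤ) = 1 := by rw [zpow_natCast, hzN]
    have hcexp : c = N * (c / N) + c % N := (Int.mul_ediv_add_emod c N).symm
    have e1 : z ^ c = z ^ (c % (N : ℤ)) := by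
      conv_lhs => rw [hcexp]
      rw [zpow_add₀ hz0, zpow_mul, hzNz, one_zpow, one_mul]
    have e2 : z ^ (C : ℤ) = z ^ (c % (N : ℤ)) := by
      rw [hC, zpow_add₀ hz0, hzNz, mul_one]
    rw [e1, ← e2, zpow_natCast]
  have hAeq : ((A : ℕ) : ℤ) = a % (N : ℤ) + N := by
    have := Int.emod_nonneg a hNne
    rw [hA_def]
    push_cast [Int.toNat_of_nonneg this]
    ring
  have hBeq : ((B : ℕ) : ℤ) = b % (N : ℤ) + N := by
    have := Int.emod_nonneg b hNne
    rw [hB_def]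
    push_cast [Int.toNat_of_nonneg this]
    ring
  have h1' : T = S.map (fun z => z ^ A) := by
    rw [h1]
    apply Multiset.map_congr rfl
    intro z hz
    exact htrans a A hAeq z (hne0 z (Multiset.mem_add.mpr (Or.inl hz)))
      (hN z (Multiset.mem_add.mpr (Or.inl hz)))
  have h2' : S = T.map (fun z => z ^ B) := by
    rw [h2]
    apply Multiset.map_congr rfl
    intro z hz
    exact htrans b B hBeq z (hne0 z (Multiset.mem_add.mpr (Or.inr hz)))
      (hN z (Multiset.mem_add.mpr (Or.inr hz)))
  -- S is stable under z ↦ z ^ (A * B)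
  have hSS : S = S.map (fun z => z ^ (A * B)) := by
    conv_lhs => rw [h2', h1', Multiset.map_map]
    apply Multiset.map_congr rfl
    intro z hz
    simp only [Function.comp_apply]
    rw [pow_mul]
  -- main goal reduces to T = S
  suffices hTS : T = S by
    have e1 : Φ.map (Int.castRingHom ℂ)
        = (T.map (fun z => X - C z)).prod :=
      (IsAlgClosed.splits _).eq_prod_roots_of_monic (hΦ.map _)
    have e2 : Ψ.map (Int.castRingHom ℂ)
        = (S.map (fun z => X - C z)).prod :=
      (IsAlgClosed.splits _).eq_prod_roots_of_monic (hΨ.map _)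
    apply Polynomial.map_injective (Int.castRingHom ℂ) Int.cast_injective
    rw [e1, e2, hTS]
  -- permutation argument
  set g : ℂ → ℂ := fun z => z ^ (A * B) with hg_def
  have hmem : ∀ z ∈ S, g z ∈ S := by
    intro z hz
    rw [hSS]
    exact Multiset.mem_map_of_mem g hz
  set E := S.toFinset with hE_def
  set σ : {x // x ∈ E} → {x // x ∈ E} := fun x =>
    ⟨g x.1, Multiset.mem_toFinset.mpr (hmem x.1 (Multiset.mem_toFinset.mp x.2))⟩ with hσ_def
  have hsurj : Function.Surjective σ := by
    intro y
    have hy : (y : ℂ) ∈ S.map g := by rw [← hSS]; exact Multiset.mem_toFinset.mp y.2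
    obtain ⟨w, hw, hgw⟩ := Multiset.mem_map.mp hy
    exact ⟨⟨w, Multiset.mem_toFinset.mpr hw⟩, Subtype.ext hgw⟩
  have hinj : Function.Injective σ := Finite.injective_iff_surjective.mpr hsurj
  set e : Equiv.Perm {x // x ∈ E} := Equiv.ofBijective σ ⟨hinj, hsurj⟩ with he_def
  set m := orderOf e with hm_def
  have hm : 0 < m := orderOf_pos e
  have hiter : ∀ (k : ℕ) (x : {x // x ∈ E}), ((e ^ k) x : ℂ) = (x : ℂ) ^ ((A * B) ^ k) := by
    intro k
    induction k with
    | zero => intro x; simp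
    | succ k ihk =>
      intro x
      rw [pow_succ, Equiv.Perm.mul_apply]
      have hex : ((e x : ℂ)) = (x : ℂ) ^ (A * B) := rfl
      rw [ihk (e x), hex, ← pow_mul, ← pow_succ']
  have hfix : ∀ z ∈ S, z ^ ((A * B) ^ m) = z := by
    intro z hz
    have := hiter m ⟨z, Multiset.mem_toFinset.mpr hz⟩
    rw [pow_orderOf_eq_one] at this
    simpa using this.symm
  by_cases hAB1 : A * B = 1
  · have hA1 : A = 1 := by
      have hle : A ≤ A * B := Nat.le_mul_of_pos_right A hB
      omega
    rw [h1', hA1]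
    simp
  · have hABpos : 0 < A * B := Nat.mul_pos hA hB
    have hAB2 : 2 ≤ A * B := by omega
    set M := (A * B) ^ m - 1 with hM_def
    have hABm : A * B ≤ (A * B) ^ m := Nat.le_self_pow hm.ne' _
    have hMpos : 0 < M := by omega
    have hM' : M + 1 = (A * B) ^ m := by omega
    have hSM : ∀ z ∈ S, z ^ M = 1 := by
      intro z hz
      have hz0 : z ≠ 0 := hne0 z (Multiset.mem_add.mpr (Or.inl hz))
      have h := hfix z hz
      rw [← hM', pow_succ] at h
      have : z ^ M * z = 1 * z := by rw [h, one_mul]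
      exact mul_right_cancel₀ hz0 this
    have hcop : Nat.Coprime A M := by
      have hd1 : Nat.gcd A M ∣ M + 1 := by
        rw [hM']
        exact dvd_trans (Nat.gcd_dvd_left A M)
          (dvd_pow (dvd_mul_right A B) hm.ne')
      have hd2 : Nat.gcd A M ∣ M := Nat.gcd_dvd_right A M
      have := Nat.dvd_sub hd1 hd2
      simp only [Nat.add_sub_cancel_left] at this
      have h1 : Nat.gcd A M ∣ 1 := by simpa using this
      exact Nat.dvd_one.mp h1
    -- transfer to ℚ
    set Ψq := Ψ.map (Int.castRingHom ℚ) with hΨq_def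
    have hcomm : Ψq.map (algebraMap ℚ ℂ) = Ψ.map (Int.castRingHom ℂ) := by
      rw [hΨq_def, Polynomial.map_map]
      congr 1
    have hq0 : Ψq ≠ 0 :=
      (Polynomial.map_ne_zero_iff (f := Int.castRingHom ℚ) Int.cast_injective).mpr hΨ.ne_zero
    have hSM' : ∀ z ∈ (Ψq.map (algebraMap ℚ ℂ)).roots, z ^ M = 1 := by
      rw [hcomm]
      exact hSM
    have happ := aux_core M A hMpos hA hcop Ψq.natDegree Ψq le_rfl hq0 hSM'
    rw [hcomm] at happ
    exact h1'.trans happ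
end

section
/- In the field ℚ(w,T) of rational functions in two variables, for any even positive integer m and any d, the identity holds: (w^{2} (w^{2}+1)) · (w^{-m} T)/(1 - w^{-m} T) + (w^{4} - 1) · (w^{-m} T^{2} + Σ_{j=1}^{(m/2)-1} w^{-2j} T)/((1 - T)(1 - w^{-m} T)) = (w^{2}+1) T/(1 - T). -/
/-!
Write `v = w^{-m}` and `S = Σ_{j=1}^{m/2-1} w^{-2j}`. After clearing denominators and dividing by
`(w² + 1) T`, the identity becomes `w² v (1 - T) + (w² - 1)(v T + S) = 1 - v T`, which is exactly
the telescoped geometric sum `(w² - 1) S = 1 - w² v`.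
-/

theorem RatFunc.one_sub_C_mul_X_ne_zero {K : Type*} [Field K] (a : K) :
    (1 - RatFunc.C a * RatFunc.X : RatFunc K) ≠ 0 := by
  rw [← RatFunc.algebraMap_C, ← RatFunc.algebraMap_X, ← map_mul,
    ← map_one (algebraMap (Polynomial K) (RatFunc K)), ← map_sub, Ne,
    map_eq_zero_iff _ (RatFunc.algebraMap_injective K)]
  intro h
  simpa using congrArg (Polynomial.eval 0) h

theorem sq_sub_one_mul_sum_Icc_zpow_neg_two_mul {K : Type*} [Field K] {w : K} (hw : w ≠ 0)
    (n : ℕ) :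
    (w ^ 2 - 1) * ∑ j ∈ Finset.Icc 1 n, w ^ (-(2 * (j : ℤ))) = 1 - w ^ (-(2 * (n : ℤ))) := by
  induction n with
  | zero => simp
  | succ n ih =>
    rw [Finset.sum_Icc_succ_top (by omega), mul_add, ih]
    push_cast
    rw [show -(2 * ((n : ℤ) + 1)) = -(2 * (n : ℤ)) - 2 by ring, zpow_sub₀ hw]
    field_simp
    ring

theorem pole_cancellation_of_even {K : Type*} [Field K] {w T : K} {m : ℕ} (hm : 0 < m)
    (hme : Even m) (hw : w ≠ 0) (hT : 1 - T ≠ 0) (hA : 1 - w ^ (-(m : ℤ)) * T ≠ 0) :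
    (w ^ 2 * (w ^ 2 + 1)) * (w ^ (-(m : ℤ)) * T) / (1 - w ^ (-(m : ℤ)) * T)
      + (w ^ 4 - 1) *
          (w ^ (-(m : ℤ)) * T ^ 2
            + (∑ j ∈ Finset.Icc 1 (m / 2 - 1), w ^ (-(2 * (j : ℤ)))) * T)
          / ((1 - T) * (1 - w ^ (-(m : ℤ)) * T))
      = (w ^ 2 + 1) * T / (1 - T) := by
  obtain ⟨n, rfl⟩ : ∃ n, m = 2 * n + 2 := ⟨m / 2 - 1, by grind⟩
  rw [show (2 * n + 2) / 2 - 1 = n by omega]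
  have hsum := sq_sub_one_mul_sum_Icc_zpow_neg_two_mul hw n
  rw [show w ^ (-(2 * (n : ℤ))) = w ^ 2 * w ^ (-((2 * n + 2 : ℕ) : ℤ)) by
    rw [← zpow_natCast, ← zpow_add₀ hw]; push_cast; ring_nf] at hsum
  field_simp
  linear_combination (w ^ 2 + 1) * T * hsum

theorem stmt_2_general (m : ℕ) (hm : 0 < m) (hme : Even m) :
    let T : RatFunc (RatFunc ℚ) := RatFunc.X
    let w : RatFunc (RatFunc ℚ) := RatFunc.C RatFunc.X
    (w ^ 2 * (w ^ 2 + 1)) * (w ^ (-(m : ℤ)) * T) / (1 - w ^ (-(m : ℤ)) * T)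
      + (w ^ 4 - 1) *
          (w ^ (-(m : ℤ)) * T ^ 2
            + (∑ j ∈ Finset.Icc 1 (m / 2 - 1), w ^ (-(2 * (j : ℤ)))) * T)
          / ((1 - T) * (1 - w ^ (-(m : ℤ)) * T))
      = (w ^ 2 + 1) * T / (1 - T) := by
  intro T w
  have hw : w ≠ 0 := by simp [w, RatFunc.X_ne_zero]
  have hT : 1 - T ≠ 0 := by
    simpa using RatFunc.one_sub_C_mul_X_ne_zero (1 : RatFunc ℚ)
  have hA : 1 - w ^ (-(m : ℤ)) * T ≠ 0 := by
    simpa only [w, T, map_zpow₀] using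
      RatFunc.one_sub_C_mul_X_ne_zero ((RatFunc.X : RatFunc ℚ) ^ (-(m : ℤ)))
  exact pole_cancellation_of_even hm hme hw hT hA

/-- In the field `ℚ(w,T)` (realized as `RatFunc (RatFunc ℚ)` with
`w` the coefficient variable and `T` the main variable), for any even positive
integer `m` (and any `d`), the rational-function identity
`(w²(w²+1))·(w^{-m}T)/(1-w^{-m}T) + (w⁴-1)·(w^{-m}T² + Σ_{j=1}^{m/2-1} w^{-2j}T)/((1-T)(1-w^{-m}T))
  = (w²+1)T/(1-T)` holds. -/
theorem stmt_2 (m : ℕ) (hm : 0 < m) (hme : Even m) (d : ℤ) :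
    let T : RatFunc (RatFunc ℚ) := RatFunc.X
    let w : RatFunc (RatFunc ℚ) := RatFunc.C RatFunc.X
    (w ^ 2 * (w ^ 2 + 1)) * (w ^ (-(m : ℤ)) * T) / (1 - w ^ (-(m : ℤ)) * T)
      + (w ^ 4 - 1) *
          (w ^ (-(m : ℤ)) * T ^ 2
            + (∑ j ∈ Finset.Icc 1 (m / 2 - 1), w ^ (-(2 * (j : ℤ)))) * T)
          / ((1 - T) * (1 - w ^ (-(m : ℤ)) * T))
      = (w ^ 2 + 1) * T / (1 - T) :=
  stmt_2_general m hm hme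
end

section
/- In the ring of formal power series A[[T]] over a commutative ring A, for positive integers N and n, letting g = gcd(N, n), one has Σ_{k ≥ 1, n ∣ kN} T^{kN/n} = T^{N/g}/(1 − T^{N/g}). -/
open scoped Classical

/-- For positive integers `N` and `n`, with `g = gcd(N, n)`, the formal
power series `Σ_{k ≥ 1, n ∣ kN} T^{kN/n}` equals `T^{N/g}/(1 − T^{N/g})` in `A[[T]]`;
equivalently, multiplied through by `1 − T^{N/g}` it equals `T^{N/g}`. -/
theorem stmt_3 (A : Type*) [CommRing A] (N n : ℕ) (hN : 0 < N) (hn : 0 < n) :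
    (PowerSeries.mk fun i =>
        if ∃ k : ℕ, 1 ≤ k ∧ n ∣ k * N ∧ k * N / n = i then (1 : A) else 0)
      * (1 - (PowerSeries.X : PowerSeries A) ^ (N / Nat.gcd N n))
    = (PowerSeries.X : PowerSeries A) ^ (N / Nat.gcd N n) := by
  set g := Nat.gcd N n with hg
  set m := N / g with hm
  have hgpos : 0 < g := Nat.gcd_pos_of_pos_left n hN
  have hgN : g ∣ N := Nat.gcd_dvd_left N n
  have hgn : g ∣ n := Nat.gcd_dvd_right N n
  have hmpos : 0 < m := Nat.div_pos (Nat.le_of_dvd hN hgN) hgpos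
  have hn'pos : 0 < n / g := Nat.div_pos (Nat.le_of_dvd hn hgn) hgpos
  have hNg : g * m = N := Nat.mul_div_cancel' hgN
  have hng : g * (n / g) = n := Nat.mul_div_cancel' hgn
  have hcop : Nat.Coprime m (n / g) := Nat.coprime_div_gcd_div_gcd hgpos
  have key : ∀ i : ℕ, (∃ k : ℕ, 1 ≤ k ∧ n ∣ k * N ∧ k * N / n = i) ↔ (m ∣ i ∧ i ≠ 0) := by
    intro i
    constructor
    · rintro ⟨k, hk1, hdvd, rfl⟩
      have hdvd' : (n / g) ∣ k := by
        have h1 : g * (n / g) ∣ k * (g * m) := by rw [hng, hNg]; exact hdvd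
        have h2 : (n / g) ∣ k * m := by
          rcases h1 with ⟨c, hc⟩
          exact ⟨c, by
            have := hc
            have hgne : g ≠ 0 := hgpos.ne'
            nlinarith [Nat.eq_of_mul_eq_mul_left hgpos (by linarith [hc] : g * (k * m) = g * ((n/g) * c))]⟩
        exact (Nat.Coprime.dvd_of_dvd_mul_right (Nat.Coprime.symm hcop)) h2
      obtain ⟨t, rfl⟩ := hdvd'
      have ht : 1 ≤ t := by
        rcases Nat.eq_zero_or_pos t with h | h
        · simp [h] at hk1
        · exact h
      have hval : (n / g) * t * N / n = t * m := by
        have : (n / g) * t * N = n * (t * m) := by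
          calc (n / g) * t * N = t * ((n / g) * N) := by ring
          _ = t * ((n / g) * (g * m)) := by rw [hNg]
          _ = t * ((g * (n / g)) * m) := by ring
          _ = n * (t * m) := by rw [hng]; ring
        rw [this, Nat.mul_div_cancel_left _ hn]
      rw [hval]
      exact ⟨⟨t, by ring⟩, Nat.mul_ne_zero (by omega) hmpos.ne'⟩
    · rintro ⟨⟨t, rfl⟩, hne⟩
      have ht : 1 ≤ t := by
        rcases Nat.eq_zero_or_pos t with h | h
        · simp [h] at hne
        · exact h
      refine ⟨t * (n / g), Nat.mul_pos ht hn'pos, ?_, ?_⟩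
      · refine ⟨t * m, ?_⟩
        calc t * (n / g) * N = t * ((n / g) * (g * m)) := by rw [hNg]; ring
        _ = t * ((g * (n / g)) * m) := by ring
        _ = n * (t * m) := by rw [hng]; ring
      · have : t * (n / g) * N = n * (t * m) := by
          calc t * (n / g) * N = t * ((n / g) * (g * m)) := by rw [hNg]; ring
          _ = t * ((g * (n / g)) * m) := by ring
          _ = n * (t * m) := by rw [hng]; ring
        rw [this, Nat.mul_div_cancel_left _ hn, mul_comm]
  ext i
  rw [mul_sub, mul_one, map_sub, PowerSeries.coeff_mk,
    PowerSeries.coeff_mul_X_pow', PowerSeries.coeff_X_pow]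
  have hcoeff : ∀ j : ℕ, (if ∃ k : ℕ, 1 ≤ k ∧ n ∣ k * N ∧ k * N / n = j then (1 : A) else 0)
      = if m ∣ j ∧ j ≠ 0 then 1 else 0 := by
    intro j; rw [if_congr (key j) rfl rfl]
  rw [hcoeff]
  by_cases hmi : m ≤ i
  · rw [if_pos hmi, PowerSeries.coeff_mk, hcoeff]
    by_cases hieq : i = m
    · subst hieq
      rw [if_pos ⟨dvd_refl m, hmpos.ne'⟩, if_neg (by simp), if_pos rfl]
      ring
    · rw [if_neg hieq]
      by_cases hdvd : m ∣ i
      · have hine : i ≠ 0 := by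
          intro h; exact hieq (by omega)
        have h1 : m ∣ i - m := (Nat.dvd_sub hdvd (dvd_refl m))
        have h2 : i - m ≠ 0 := by
          intro h
          have : i = m := by omega
          exact hieq this
        rw [if_pos ⟨hdvd, hine⟩, if_pos ⟨h1, h2⟩]
        ring
      · have h3 : ¬ (m ∣ i - m ∧ i - m ≠ 0) := by
          rintro ⟨h1, h2⟩
          exact hdvd (by
            have := Nat.dvd_sub h1 (dvd_refl m)
            have heq : i = (i - m) + m := by omega
            rw [heq]; exact Nat.dvd_add h1 (dvd_refl m))
        rw [if_neg (by tauto), if_neg h3]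
        ring
  · rw [if_neg hmi]
    have hieq : i ≠ m := by omega
    rw [if_neg hieq]
    have : ¬ (m ∣ i ∧ i ≠ 0) := by
      rintro ⟨h1, h2⟩
      exact hmi (Nat.le_of_dvd (Nat.pos_of_ne_zero h2) h1)
    rw [if_neg this]
    ring
end

section
/- Let m be an even positive integer and d an integer, and let L be an indeterminate. For arbitrary coefficients A, B in ℚ(L), applying the extraction operator Z ↦ Z^{(m)}, which acts on a power-series expansion Σ aₙ(L)Tⁿ by Σ a_{mn}(L)Tⁿ (keeping only the coefficients of T^{mi} and reindexing), to Z(T) = A·(L^{1−d}T²)/(1−L^{1−d}T²) + B·(L^{1−d}T³)/((1−T)(1−L^{1−d}T²)) yields the identity in ℚ(L)(T): Z^{(m)}(T) = A·(L^{m(1−d)/2}T)/(1−L^{m(1−d)/2}T) + B·(L^{m(1−d)/2}T² + Σ_{j=1}^{(m/2)−1} L^{(1−d)j}T)/((1−T)(1−L^{m(1−d)/2}T)). -/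
namespace Stmt6Aux

open PowerSeries Finset

variable {K : Type*} [Field K]

noncomputable def pg (c : K) (t : ℕ) : K := ∑ k ∈ Finset.range t, c ^ (k + 1)

lemma pg_zero (c : K) : pg c 0 = 0 := by simp [pg]

lemma pg_one (c : K) : pg c 1 = c := by simp [pg]

lemma pg_succ (c : K) (t : ℕ) : pg c (t + 1) = pg c t + c ^ (t + 1) :=
  Finset.sum_range_succ _ _

lemma pg_add (c : K) (t r : ℕ) : pg c (t + r) = pg c t + c ^ t * pg c r := by
  induction r with
  | zero => simp [pg]
  | succ r ih =>
    rw [show t + (r + 1) = (t + r) + 1 from rfl, pg_succ, ih, pg_succ c r]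
    ring

lemma pg_eq_Icc (c : K) (t : ℕ) : ∑ j ∈ Finset.Icc 1 t, c ^ j = pg c t := by
  induction t with
  | zero => simp [pg]
  | succ t ih => rw [Finset.sum_Icc_succ_top (by omega), ih, pg_succ]

noncomputable def aa (c A B : K) (n : ℕ) : K :=
  A * (if Even n ∧ n ≠ 0 then c ^ (n / 2) else 0) + B * pg c ((n - 1) / 2)

lemma aa_zero (c A B : K) : aa c A B 0 = 0 := by simp [aa, pg]

lemma aa_even (c A B : K) (t : ℕ) :
    aa c A B (2 * t + 2) = A * c ^ (t + 1) + B * pg c t := by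
  unfold aa
  rw [if_pos ⟨⟨t + 1, by ring⟩, by omega⟩, show (2 * t + 2) / 2 = t + 1 by omega,
    show (2 * t + 2 - 1) / 2 = t by omega]

lemma aa_odd (c A B : K) (t : ℕ) :
    aa c A B (2 * t + 1) = B * pg c t := by
  unfold aa
  rw [if_neg (by rintro ⟨⟨u, hu⟩, -⟩; omega), show (2 * t + 1 - 1) / 2 = t by omega]
  ring

lemma aa_at (c A B : K) {s i t : ℕ} (h : s * i = t + 1) :
    aa c A B (2 * (s * i)) = A * c ^ (t + 1) + B * pg c t := by
  rw [h, show 2 * (t + 1) = 2 * t + 2 by ring, aa_even]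

/-- The explicit series solves the original equation. -/
lemma aa_solves (c A B : K) :
    (PowerSeries.mk (aa c A B)) * ((1 - C (R := K) c * X ^ 2) * (1 - X))
      = C (R := K) A * (C (R := K) c * X ^ 2) * (1 - X) + C (R := K) B * (C (R := K) c * X ^ 3) := by
  have hL : (PowerSeries.mk (aa c A B)) * ((1 - C (R := K) c * X ^ 2) * (1 - X))
      = PowerSeries.mk (aa c A B) - PowerSeries.mk (aa c A B) * X ^ 1
        - C (R := K) c * (PowerSeries.mk (aa c A B) * X ^ 2)
        + C (R := K) c * (PowerSeries.mk (aa c A B) * X ^ 3) := by ring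
  have hR : C (R := K) A * (C (R := K) c * X ^ 2) * (1 - X) + C (R := K) B * (C (R := K) c * X ^ 3)
      = C (R := K) (A * c) * X ^ 2 + C (R := K) ((B - A) * c) * X ^ 3 := by
    simp only [map_mul, map_sub]; ring
  rw [hL, hR]
  ext n
  simp only [map_add, map_sub, coeff_C_mul, coeff_mul_X_pow', coeff_mk, coeff_X_pow, coeff_C]
  match n with
  | 0 => norm_num [aa_zero]
  | 1 => norm_num [show aa c A B 1 = 0 from by simpa [pg_zero] using aa_odd c A B 0, aa_zero]
  | 2 =>
    norm_num [aa_zero, show aa c A B 1 = 0 from by simpa [pg_zero] using aa_odd c A B 0,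
      show aa c A B 2 = A * c from by simpa [pg_zero] using aa_even c A B 0]
  | 3 =>
    norm_num [aa_zero, show aa c A B 1 = 0 from by simpa [pg_zero] using aa_odd c A B 0,
      show aa c A B 2 = A * c from by simpa [pg_zero] using aa_even c A B 0,
      show aa c A B 3 = B * c from by simpa [pg_one] using aa_odd c A B 1]
    ring
  | (k + 4) =>
    have h4 : (1:ℕ) ≤ k + 4 := by omega
    have h42 : (2:ℕ) ≤ k + 4 := by omega
    have h43 : (3:ℕ) ≤ k + 4 := by omega
    simp only [if_pos h4, if_pos h42, if_pos h43, if_neg (show ¬ (k+4) = 2 by omega),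
      if_neg (show ¬ (k+4) = 3 by omega)]
    have e1 : k + 4 - 1 = k + 3 := by omega
    have e2 : k + 4 - 2 = k + 2 := by omega
    have e3 : k + 4 - 3 = k + 1 := by omega
    rw [e1, e2, e3]
    rw [if_neg (show ¬ (k + 2 : ℕ) = 0 by omega), if_neg (show ¬ (k + 1 : ℕ) = 0 by omega)]
    rcases Nat.even_or_odd k with ⟨t, ht⟩ | ⟨t, ht⟩
    · subst ht
      rw [show t + t + 4 = 2 * (t + 1) + 2 by ring, show t + t + 3 = 2 * (t + 1) + 1 by ring,
        show t + t + 2 = 2 * t + 2 by ring, show t + t + 1 = 2 * t + 1 by ring,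
        aa_even, aa_odd, aa_even, aa_odd]
      ring
    · subst ht
      rw [show 2 * t + 1 + 4 = 2 * (t + 2) + 1 by ring,
        show 2 * t + 1 + 3 = 2 * (t + 1) + 2 by ring,
        show 2 * t + 1 + 2 = 2 * (t + 1) + 1 by ring,
        show 2 * t + 1 + 1 = 2 * t + 2 by ring,
        aa_odd, aa_even, aa_odd, aa_even, pg_succ c (t + 1), pg_succ c t]
      ring

/-- The extracted series solves the target equation. -/
lemma w_solves (c A B : K) {s : ℕ} (hs : 0 < s) :
    (PowerSeries.mk fun i => aa c A B (2 * (s * i))) * ((1 - C (R := K) (c ^ s) * X) * (1 - X))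
      = C (R := K) A * (C (R := K) (c ^ s) * X) * (1 - X)
        + C (R := K) B * (C (R := K) (c ^ s) * X ^ 2 + C (R := K) (pg c (s - 1)) * X) := by
  have hL : (PowerSeries.mk fun i => aa c A B (2 * (s * i))) * ((1 - C (R := K) (c ^ s) * X) * (1 - X))
      = (PowerSeries.mk fun i => aa c A B (2 * (s * i)))
        - (PowerSeries.mk fun i => aa c A B (2 * (s * i))) * X ^ 1
        - C (R := K) (c ^ s) * ((PowerSeries.mk fun i => aa c A B (2 * (s * i))) * X ^ 1)
        + C (R := K) (c ^ s) * ((PowerSeries.mk fun i => aa c A B (2 * (s * i))) * X ^ 2) := by ring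
  have hR : C (R := K) A * (C (R := K) (c ^ s) * X) * (1 - X)
        + C (R := K) B * (C (R := K) (c ^ s) * X ^ 2 + C (R := K) (pg c (s - 1)) * X)
      = C (R := K) (A * c ^ s + B * pg c (s - 1)) * X ^ 1 + C (R := K) ((B - A) * c ^ s) * X ^ 2 := by
    simp only [map_mul, map_add, map_sub]; ring
  rw [hL, hR]
  ext n
  simp only [map_add, map_sub, coeff_C_mul, coeff_mul_X_pow', coeff_mk, coeff_C]
  match n with
  | 0 => norm_num [aa_zero]
  | 1 =>
    norm_num [aa_zero]
    obtain ⟨t, rfl⟩ : ∃ t, s = t + 1 := ⟨s - 1, by omega⟩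
    rw [show 2 * (t + 1) = 2 * t + 2 by ring, aa_even, Nat.add_sub_cancel]
  | 2 =>
    norm_num [aa_zero]
    obtain ⟨t, rfl⟩ : ∃ t, s = t + 1 := ⟨s - 1, by omega⟩
    rw [show 2 * ((t + 1) * 2) = 2 * (2 * t + 1) + 2 by ring, aa_even,
      show 2 * (t + 1) = 2 * t + 2 by ring, aa_even,
      show 2 * t + 1 = t + (t + 1) by ring, pg_add, show t + 1 = 1 + t by ring, pg_add, pg_one]
    ring
  | (k + 3) =>
    norm_num [aa_zero]
    rw [show k + 3 - 2 = k + 1 by omega, if_neg (show ¬ (k + 1 : ℕ) = 0 by omega)]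
    have hk1 : 1 ≤ s * (k + 1) := Nat.mul_pos hs (by omega)
    have h1 : s * (k + 1) = (s * (k + 1) - 1) + 1 := by omega
    have h2 : s * (k + 2) = (s * (k + 1) - 1 + s) + 1 := by
      have e : s * (k + 2) = s * (k + 1) + s := by ring
      omega
    have h3 : s * (k + 3) = (s * (k + 1) - 1 + s + s) + 1 := by
      have e : s * (k + 3) = s * (k + 1) + s + s := by ring
      omega
    rw [aa_at c A B h3, aa_at c A B h2, aa_at c A B h1,
      pg_add c (s * (k + 1) - 1 + s) s, pg_add c (s * (k + 1) - 1) s]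
    ring


end Stmt6Aux

open Stmt6Aux PowerSeries in
/-- (even modulus) Let `m` be an even positive integer, `d` an integer,
`A, B ∈ ℚ(L)` (with `L` the variable of `ℚ(L)`). If `Z ∈ ℚ(L)[[T]]` satisfies
`Z = A·L^{1−d}T²/(1−L^{1−d}T²) + B·L^{1−d}T³/((1−T)(1−L^{1−d}T²))`
(stated multiplied through by the denominators), then the extraction
`Z^{(m)} = Σᵢ (coeff of T^{mi} in Z)·Tⁱ` satisfies
`Z^{(m)} = A·L^{m(1−d)/2}T/(1−L^{m(1−d)/2}T)
  + B·(L^{m(1−d)/2}T² + Σ_{j=1}^{m/2−1} L^{(1−d)j}T)/((1−T)(1−L^{m(1−d)/2}T))`. -/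
theorem stmt_6 (d : ℤ) (m : ℕ) (hm : 0 < m) (hme : Even m)
    (A B : RatFunc ℚ) (Z : PowerSeries (RatFunc ℚ)) :
    let K := RatFunc ℚ
    let L : K := RatFunc.X
    let Cc := PowerSeries.C (R := K)
    let X : PowerSeries K := PowerSeries.X
    Z * ((1 - Cc (L ^ (1 - d)) * X ^ 2) * (1 - X))
        = Cc A * (Cc (L ^ (1 - d)) * X ^ 2) * (1 - X)
          + Cc B * (Cc (L ^ (1 - d)) * X ^ 3) →
    (PowerSeries.mk fun i => PowerSeries.coeff (R := K) (m * i) Z)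
        * ((1 - Cc (L ^ (((m / 2 : ℕ) : ℤ) * (1 - d))) * X) * (1 - X))
      = Cc A * (Cc (L ^ (((m / 2 : ℕ) : ℤ) * (1 - d))) * X) * (1 - X)
        + Cc B * (Cc (L ^ (((m / 2 : ℕ) : ℤ) * (1 - d))) * X ^ 2
            + (∑ j ∈ Finset.Icc 1 (m / 2 - 1), Cc (L ^ ((1 - d) * (j : ℤ)))) * X) := by
  intro K L Cc X h
  set s := m / 2 with hsdef
  have hs : 0 < s := by
    rw [hsdef]; rcases hme with ⟨t, ht⟩; omega
  have hm2 : m = 2 * s := by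
    rw [hsdef]; rcases hme with ⟨t, ht⟩; omega
  set c : K := L ^ (1 - d) with hcdef
  -- exponent rewrites
  have hu : L ^ (((s : ℕ) : ℤ) * (1 - d)) = c ^ s := by
    rw [mul_comm, zpow_mul, zpow_natCast]
  have hj : ∀ j : ℕ, L ^ ((1 - d) * (j : ℤ)) = c ^ j := by
    intro j; rw [zpow_mul, zpow_natCast]
  -- identify Z
  have hP : ((1 - Cc c * X ^ 2) * (1 - X)) ≠ 0 := by
    intro h0
    have := congrArg (PowerSeries.constantCoeff (R := K)) h0
    simp only [show Cc = PowerSeries.C (R := K) from rfl, show X = (PowerSeries.X : PowerSeries K) from rfl,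
      map_mul, map_sub, map_one, map_pow, PowerSeries.constantCoeff_X,
      PowerSeries.constantCoeff_C, map_zero] at this
    norm_num at this
  have hZ : Z = PowerSeries.mk (aa c A B) := by
    apply mul_right_cancel₀ hP
    rw [h, aa_solves]
  -- rewrite the sum of constants
  have hsum : (∑ j ∈ Finset.Icc 1 (s - 1), Cc (L ^ ((1 - d) * (j : ℤ))))
      = Cc (pg c (s - 1)) := by
    rw [← map_sum]
    congr 1
    rw [← pg_eq_Icc]
    exact Finset.sum_congr rfl fun j _ => hj j
  rw [hu, hsum]
  have hW : (PowerSeries.mk fun i => PowerSeries.coeff (R := K) (m * i) Z)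
      = PowerSeries.mk (fun i => aa c A B (2 * (s * i))) := by
    apply PowerSeries.ext
    intro i
    rw [PowerSeries.coeff_mk, PowerSeries.coeff_mk, hZ, PowerSeries.coeff_mk, hm2, mul_assoc]
  rw [hW]
  exact w_solves c A B hs
end

section
/- Let m be an odd positive integer and d an integer, and let A, B ∈ ℚ(L). With Z(T) = A·(L^{1−d}T²)/(1−L^{1−d}T²) + B·(L^{1−d}T³)/((1−T)(1−L^{1−d}T²)) ∈ ℚ(L)[[T]] and the operator Z ↦ Z^{(m)} sending Σ aₙTⁿ to Σ a_{mn}Tⁿ, one has Z^{(m)}(T) = A·(L^{m(1−d)}T²)/(1−L^{m(1−d)}T²) + B/((1−T)(1−L^{m(1−d)}T²)) · ( L^{m(1−d)}T³ + Σ_{j=1}^{(m−1)/2} L^{(1−d)j}T + Σ_{j=(m+1)/2}^{m−1} L^{(1−d)j}T² ). -/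
/-!
Put `u = L^(1-d)`. Since `(1 - uT²)(1 - T)` is a unit, the hypothesis says
`Z = A·G(u) + B·H(u)`, where `G(u) = Σ_{k ≥ 1} u^k T^{2k}` and the coefficient of `T^n` in `H(u)`
is the partial geometric sum `s(⌊(n-1)/2⌋)`, `s(k) = u + ⋯ + u^k`. Taking every `m`-th
coefficient is linear. For odd `m` it sends `G(u)` to `G(u^m)`. For `H(u)`, the identity
`s(m + k) = s(m) + u^m s(k)` shows that multiplying the decimated series by `1 - u^m T²` leaves
the coefficients `s(min(m, ⌊(mn-1)/2⌋))`, which are constant from `n = 3` on; multiplying by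
`1 - T` then leaves only the cubic polynomial of the claim.
-/

open PowerSeries Finset

section

variable {R : Type*} [CommRing R]

lemma sum_Icc_one_pow_add (u : R) (m k : ℕ) :
    ∑ j ∈ Icc 1 (m + k), u ^ j = ∑ j ∈ Icc 1 m, u ^ j + u ^ m * ∑ j ∈ Icc 1 k, u ^ j := by
  induction k with
  | zero => simp
  | succ k ih =>
    rw [← add_assoc, sum_Icc_succ_top (by omega), ih, sum_Icc_succ_top (by omega)]
    ring

lemma sum_Icc_one_pow_split (u : R) {k l : ℕ} (hkl : k ≤ l) :
    ∑ j ∈ Icc 1 l, u ^ j = ∑ j ∈ Icc 1 k, u ^ j + ∑ j ∈ Icc (k + 1) l, u ^ j := by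
  simp only [← Ico_add_one_right_eq_Icc]
  exact (sum_Ico_consecutive _ (by omega) (by omega)).symm

end

namespace PowerSeries

variable {R : Type*} [CommRing R]

noncomputable def decimate (m : ℕ) (F : R⟦X⟧) : R⟦X⟧ := mk fun n => coeff (m * n) F

@[simp]
lemma coeff_decimate (m n : ℕ) (F : R⟦X⟧) : coeff n (decimate m F) = coeff (m * n) F :=
  coeff_mk _ _

@[simp]
lemma decimate_one (F : R⟦X⟧) : decimate 1 F = F := by
  ext n; simp

lemma decimate_add_C_mul (m : ℕ) (a b : R) (F G : R⟦X⟧) :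
    decimate m (C a * F + C b * G) = C a * decimate m F + C b * decimate m G := by
  ext n; simp [coeff_C_mul]

lemma coeff_mul_one_sub_C_mul_X_pow (F : R⟦X⟧) (v : R) (k n : ℕ) :
    coeff n (F * (1 - C v * X ^ k)) = coeff n F - v * if k ≤ n then coeff (n - k) F else 0 := by
  simp [mul_sub, mul_left_comm F, coeff_C_mul, coeff_mul_X_pow']

lemma coeff_mul_one_sub_X (F : R⟦X⟧) (n : ℕ) :
    coeff n (F * (1 - X)) = coeff n F - if 1 ≤ n then coeff (n - 1) F else 0 := by
  simpa using coeff_mul_one_sub_C_mul_X_pow F 1 1 n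

/-- The expansion of `uT²/(1 - uT²)`. -/
noncomputable def evenGeom (u : R) : R⟦X⟧ :=
  mk fun n => if Even n ∧ n ≠ 0 then u ^ (n / 2) else 0

/-- The expansion of `uT³/((1 - T)(1 - uT²))`. -/
noncomputable def oddTail (u : R) : R⟦X⟧ :=
  mk fun n => ∑ j ∈ Icc 1 ((n - 1) / 2), u ^ j

lemma evenGeom_mul (u : R) : evenGeom u * (1 - C u * X ^ 2) = C u * X ^ 2 := by
  ext n
  rw [coeff_mul_one_sub_C_mul_X_pow, coeff_C_mul_X_pow]
  simp only [evenGeom, coeff_mk]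
  rcases n with _ | _ | k
  · simp
  · simp
  · simp only [show k + 1 + 1 = k + 2 by rfl, Nat.add_sub_cancel, Nat.even_add,
      show (k + 2) / 2 = k / 2 + 1 by omega, le_add_iff_nonneg_left, zero_le, if_true,
      add_eq_right, ne_eq, even_two, iff_true]
    by_cases hk : Even k
    · by_cases hk0 : k = 0
      · simp [hk0]
      · simp [hk, hk0, pow_succ, mul_comm]
    · have hk0 : k ≠ 0 := by rintro rfl; exact hk Even.zero
      simp [hk, hk0]

lemma decimate_evenGeom (u : R) {m : ℕ} (hm : Odd m) :
    decimate m (evenGeom u) = evenGeom (u ^ m) := by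
  ext n
  have hm0 : m ≠ 0 := by rintro rfl; simp at hm
  simp only [coeff_decimate, evenGeom, coeff_mk, Nat.even_mul, mul_ne_zero_iff, ne_eq, hm0,
    not_false_eq_true, true_and, Nat.not_even_iff_odd.mpr hm, false_or]
  split_ifs with h
  · rw [← pow_mul, Nat.mul_div_assoc _ (even_iff_two_dvd.mp h.1)]
  · rfl

lemma coeff_oddTail (u : R) (n : ℕ) : coeff n (oddTail u) = ∑ j ∈ Icc 1 ((n - 1) / 2), u ^ j :=
  coeff_mk _ _

lemma coeff_decimate_oddTail_mul (u : R) {m : ℕ} (hm : 0 < m) (n : ℕ) :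
    coeff n (decimate m (oddTail u) * (1 - C (u ^ m) * X ^ 2))
      = ∑ j ∈ Icc 1 (min m ((m * n - 1) / 2)), u ^ j := by
  rw [coeff_mul_one_sub_C_mul_X_pow]
  simp only [coeff_decimate, coeff_oddTail]
  rcases n with _ | _ | _ | k
  · simp
  · rw [if_neg (by omega), min_eq_right (by omega), mul_zero, sub_zero, zero_add, mul_one]
  · rw [if_pos le_rfl, min_eq_right (by omega)]
    simp
  · have h3 : m * (k + 1 + 1 + 1) = m * (k + 1) + 2 * m := by ring
    have h1 : m * (k + 1) = m * k + m := by ring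
    rw [if_pos (by omega), min_eq_left (by omega), show k + 1 + 1 + 1 - 2 = k + 1 from rfl,
      show (m * (k + 1 + 1 + 1) - 1) / 2 = m + (m * (k + 1) - 1) / 2 by omega, sum_Icc_one_pow_add]
    ring

lemma decimate_oddTail_mul (u : R) {m : ℕ} (hm : 0 < m) :
    decimate m (oddTail u) * ((1 - C (u ^ m) * X ^ 2) * (1 - X))
      = C (u ^ m) * X ^ 3 + (∑ j ∈ Icc 1 ((m - 1) / 2), C (u ^ j)) * X
        + (∑ j ∈ Icc ((m + 1) / 2) (m - 1), C (u ^ j)) * X ^ 2 := by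
  rw [← mul_assoc]
  ext n
  simp only [← map_sum, coeff_mul_one_sub_X, coeff_decimate_oddTail_mul u hm,
    map_add, coeff_C_mul, coeff_X, coeff_X_pow]
  rcases n with _ | _ | _ | _ | k
  · simp
  · rw [min_eq_right (by omega)]
    simp
  · rw [min_eq_right (by omega), min_eq_right (by omega), show (m * 2 - 1) / 2 = m - 1 by omega,
      sum_Icc_one_pow_split u (show (m - 1) / 2 ≤ m - 1 by omega)]
    simp [show (m - 1) / 2 + 1 = (m + 1) / 2 by omega]
  · rw [min_eq_left (by omega), min_eq_right (by omega), show (m * 2 - 1) / 2 = m - 1 by omega]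
    nth_rw 1 [show m = m - 1 + 1 by omega]
    rw [sum_Icc_succ_top (by omega), Nat.sub_add_cancel hm]
    simp
  · have h3 : m * (k + 1 + 1 + 1) = m * k + 3 * m := by ring
    have h4 : m * (k + 1 + 1 + 1 + 1) = m * k + 4 * m := by ring
    rw [show k + 1 + 1 + 1 + 1 - 1 = k + 1 + 1 + 1 from rfl, min_eq_left (by omega),
      min_eq_left (by omega)]
    simp

lemma oddTail_mul (u : R) : oddTail u * ((1 - C u * X ^ 2) * (1 - X)) = C u * X ^ 3 := by
  simpa using decimate_oddTail_mul u one_pos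

lemma isUnit_one_sub_C_mul_X_sq_mul_one_sub_X (v : R) : IsUnit ((1 - C v * X ^ 2) * (1 - X)) := by
  simp [isUnit_iff_constantCoeff]

end PowerSeries

theorem stmt_7_general (d : ℤ) (m : ℕ) (hmo : Odd m)
    (A B : RatFunc ℚ) (Z : PowerSeries (RatFunc ℚ)) :
    let K := RatFunc ℚ
    let L : K := RatFunc.X
    let Cc := PowerSeries.C (R := K)
    let X : PowerSeries K := PowerSeries.X
    Z * ((1 - Cc (L ^ (1 - d)) * X ^ 2) * (1 - X))
        = Cc A * (Cc (L ^ (1 - d)) * X ^ 2) * (1 - X)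
          + Cc B * (Cc (L ^ (1 - d)) * X ^ 3) →
    (PowerSeries.mk fun i => PowerSeries.coeff (R := K) (m * i) Z)
        * ((1 - Cc (L ^ ((m : ℤ) * (1 - d))) * X ^ 2) * (1 - X))
      = Cc A * (Cc (L ^ ((m : ℤ) * (1 - d))) * X ^ 2) * (1 - X)
        + Cc B * (Cc (L ^ ((m : ℤ) * (1 - d))) * X ^ 3
            + (∑ j ∈ Finset.Icc 1 ((m - 1) / 2), Cc (L ^ ((1 - d) * (j : ℤ)))) * X
            + (∑ j ∈ Finset.Icc ((m + 1) / 2) (m - 1), Cc (L ^ ((1 - d) * (j : ℤ)))) * X ^ 2) := by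
  intro K L Cc X hZ
  set u : K := L ^ (1 - d)
  have hZ_eq : Z = C A * evenGeom u + C B * oddTail u :=
    (isUnit_one_sub_C_mul_X_sq_mul_one_sub_X u).mul_right_cancel <| by
      linear_combination hZ - C A * (1 - X) * evenGeom_mul u - C B * oddTail_mul u
  simp only [zpow_mul L (1 - d), zpow_natCast]
  rw [zpow_mul', zpow_natCast]
  change decimate m Z * _ = _
  rw [hZ_eq, decimate_add_C_mul, decimate_evenGeom u hmo]
  linear_combination C A * (1 - X) * evenGeom_mul (u ^ m) + C B * decimate_oddTail_mul u hmo.pos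

/-- (odd modulus) Let `m` be an odd positive integer, `d` an integer,
`A, B ∈ ℚ(L)`. If `Z ∈ ℚ(L)[[T]]` satisfies
`Z = A·L^{1−d}T²/(1−L^{1−d}T²) + B·L^{1−d}T³/((1−T)(1−L^{1−d}T²))`
(stated multiplied through by the denominators), then
`Z^{(m)} = A·L^{m(1−d)}T²/(1−L^{m(1−d)}T²)
  + B/((1−T)(1−L^{m(1−d)}T²)) · (L^{m(1−d)}T³ + Σ_{j=1}^{(m−1)/2} L^{(1−d)j}T
      + Σ_{j=(m+1)/2}^{m−1} L^{(1−d)j}T²)`. -/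
theorem stmt_7 (d : ℤ) (m : ℕ) (hm : 0 < m) (hmo : Odd m)
    (A B : RatFunc ℚ) (Z : PowerSeries (RatFunc ℚ)) :
    let K := RatFunc ℚ
    let L : K := RatFunc.X
    let Cc := PowerSeries.C (R := K)
    let X : PowerSeries K := PowerSeries.X
    Z * ((1 - Cc (L ^ (1 - d)) * X ^ 2) * (1 - X))
        = Cc A * (Cc (L ^ (1 - d)) * X ^ 2) * (1 - X)
          + Cc B * (Cc (L ^ (1 - d)) * X ^ 3) →
    (PowerSeries.mk fun i => PowerSeries.coeff (R := K) (m * i) Z)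
        * ((1 - Cc (L ^ ((m : ℤ) * (1 - d))) * X ^ 2) * (1 - X))
      = Cc A * (Cc (L ^ ((m : ℤ) * (1 - d))) * X ^ 2) * (1 - X)
        + Cc B * (Cc (L ^ ((m : ℤ) * (1 - d))) * X ^ 3
            + (∑ j ∈ Finset.Icc 1 ((m - 1) / 2), Cc (L ^ ((1 - d) * (j : ℤ)))) * X
            + (∑ j ∈ Finset.Icc ((m + 1) / 2) (m - 1), Cc (L ^ ((1 - d) * (j : ℤ)))) * X ^ 2) :=
  stmt_7_general d m hmo A B Z
end
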